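/- If f ≤ 0 a.e. in Ω, then the obstacle solution has no larger Dirichlet energy than the obstacle: ∫_Ω |∇T_f(ψ)|^p dx ≤ ∫_Ω |∇ψ|^p dx. -/

import Mathlib

open MeasureTheory Filter Topology Real
open scoped RealInnerProductSpace

noncomputable section

abbrev EucN (N : ℕ) := EuclideanSpace ℝ (Fin N)

/-- A candidate Sobolev element: the function together with its (weak) gradient. -/
abbrev SobPair (N : ℕ) := (EucN N → ℝ) × (EucN N → EucN N)

/-- Membership in (our model of) `W^{1,p}_0(Ω)`: both the function `u.1` and the
gradient `u.2` are in `L^p(Ω)`, and `u.2` is the weak gradient of `u.1`. -/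
def MemW1p0 (N : ℕ) (p : ℝ) (Ω : Set (EucN N)) (u : SobPair N) : Prop :=
  MemLp u.1 (ENNReal.ofReal p) (volume.restrict Ω) ∧
  MemLp u.2 (ENNReal.ofReal p) (volume.restrict Ω) ∧
  ∀ φ : EucN N → ℝ, ContDiff ℝ (⊤ : ℕ∞) φ → HasCompactSupport φ → tsupport φ ⊆ Ω →
    ∫ x in Ω, u.1 x • gradient φ x = - ∫ x in Ω, φ x • u.2 x

/-- The obstacle constraint set `K(ψ)`. -/
def Kset (N : ℕ) (p : ℝ) (Ω : Set (EucN N)) (ψ : SobPair N) : Set (SobPair N) :=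
  {v | MemW1p0 N p Ω v ∧ ∀ᵐ x ∂(volume.restrict Ω), ψ.1 x ≤ v.1 x}

/-- `σ(u) = |∇u|^{p-2} ∇u`. -/
def sigmaP (N : ℕ) (p : ℝ) (Du : EucN N → EucN N) : EucN N → EucN N :=
  fun x => ‖Du x‖ ^ (p - 2) • Du x

/-- `u` solves the obstacle problem variational inequality. -/
def SolvesObstacle (N : ℕ) (p : ℝ) (Ω : Set (EucN N)) (ψ : SobPair N)
    (f : EucN N → ℝ) (u : SobPair N) : Prop :=
  u ∈ Kset N p Ω ψ ∧
  ∀ v ∈ Kset N p Ω ψ,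
    ∫ x in Ω, ⟪sigmaP N p u.2 x, v.2 x - u.2 x⟫ ≥ ∫ x in Ω, f x * (v.1 x - u.1 x)

/-- `u` is `f`-superharmonic: `-Δ_p u ≥ f` in the sense of distributions. -/
def FSuperharmonic (N : ℕ) (p : ℝ) (Ω : Set (EucN N)) (f : EucN N → ℝ)
    (u : SobPair N) : Prop :=
  ∀ φ : EucN N → ℝ, ContDiff ℝ (⊤ : ℕ∞) φ → HasCompactSupport φ → tsupport φ ⊆ Ω →
    (∀ x, 0 ≤ φ x) →
    ∫ x in Ω, ⟪sigmaP N p u.2 x, gradient φ x⟫ ≥ ∫ x in Ω, f x * φ x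

/-- Weak convergence in `W^{1,p}_0(Ω)` (`q` is the conjugate exponent of `p`),
tested against `L^q` functions for both the functions and their gradients. -/
def WeakConvW1p (N : ℕ) (p q : ℝ) (Ω : Set (EucN N))
    (vk : ℕ → SobPair N) (v : SobPair N) : Prop :=
  MemW1p0 N p Ω v ∧
  (∀ g : EucN N → ℝ, MemLp g (ENNReal.ofReal q) (volume.restrict Ω) →
    Tendsto (fun k => ∫ x in Ω, (vk k).1 x * g x) atTop (𝓝 (∫ x in Ω, v.1 x * g x))) ∧
  (∀ G : EucN N → EucN N, MemLp G (ENNReal.ofReal q) (volume.restrict Ω) →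
    Tendsto (fun k => ∫ x in Ω, ⟪(vk k).2 x, G x⟫) atTop (𝓝 (∫ x in Ω, ⟪v.2 x, G x⟫)))

/-- The energy functional `I(v) = (1/p)∫|∇v|^p − ∫ f v`. -/
def energyI (N : ℕ) (p : ℝ) (Ω : Set (EucN N)) (f : EucN N → ℝ) (v : SobPair N) : ℝ :=
  (1 / p) * (∫ x in Ω, ‖v.2 x‖ ^ p) - ∫ x in Ω, f x * v.1 x

/-- if `f ≤ 0` a.e., the obstacle solution has no larger Dirichlet
energy than the obstacle. -/
theorem stmt14 (N : ℕ) (hN : 2 ≤ N) (p q : ℝ) (hpq : p.HolderConjugate q)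
    (Ω : Set (EucN N)) (hΩo : IsOpen Ω) (hΩc : IsConnected Ω)
    (hΩb : Bornology.IsBounded Ω)
    (f : EucN N → ℝ) (hf : MemLp f (ENNReal.ofReal q) (volume.restrict Ω))
    (hfneg : ∀ᵐ x ∂(volume.restrict Ω), f x ≤ 0)
    (ψ : SobPair N) (hψ : MemW1p0 N p Ω ψ)
    (u : SobPair N) (hu : SolvesObstacle N p Ω ψ f u) :
    (∫ x in Ω, ‖u.2 x‖ ^ p) ≤ ∫ x in Ω, ‖ψ.2 x‖ ^ p := by
  classical
  set μ := volume.restrict Ω with hμ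
  have hp1 : 1 < p := hpq.lt
  have hp0 : 0 < p := hpq.pos
  have hq0 : 0 < q := hpq.symm.pos
  have hDu : MemLp u.2 (ENNReal.ofReal p) μ := hu.1.1.2.1
  have hDψ : MemLp ψ.2 (ENNReal.ofReal p) μ := hψ.2.1
  -- pointwise facts about sigmaP
  have hσnorm : ∀ x, ‖sigmaP N p u.2 x‖ = ‖u.2 x‖ ^ (p - 1) := by
    intro x
    simp only [sigmaP, norm_smul, Real.norm_eq_abs]
    rcases eq_or_ne (‖u.2 x‖) 0 with h | h
    · rw [h, Real.zero_rpow (by linarith : p - 1 ≠ 0), mul_zero]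
    · have hx : 0 < ‖u.2 x‖ := lt_of_le_of_ne (norm_nonneg _) (Ne.symm h)
      rw [abs_of_nonneg (Real.rpow_nonneg (norm_nonneg _) _)]
      rw [show p - 1 = (p - 2) + 1 by ring, Real.rpow_add_one h]
  have hσinner : ∀ x, ⟪sigmaP N p u.2 x, u.2 x⟫ = ‖u.2 x‖ ^ p := by
    intro x
    simp only [sigmaP, real_inner_smul_left, real_inner_self_eq_norm_sq]
    rcases eq_or_ne (‖u.2 x‖) 0 with h | h
    · rw [h, Real.zero_rpow hp0.ne']
      simp
    · have hx : 0 < ‖u.2 x‖ := lt_of_le_of_ne (norm_nonneg _) (Ne.symm h)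
      rw [show (‖u.2 x‖ : ℝ) ^ (2 : ℕ) = ‖u.2 x‖ ^ (2 : ℝ) by
        rw [← Real.rpow_natCast (‖u.2 x‖) 2]; norm_num]
      rw [← Real.rpow_add hx]
      norm_num
  -- measurability of sigmaP
  have hσmeas : AEStronglyMeasurable (sigmaP N p u.2) μ := by
    have h1 : AEMeasurable (fun x => ‖u.2 x‖ ^ (p - 2)) μ :=
      hDu.1.norm.aemeasurable.pow aemeasurable_const
    exact (h1.aestronglyMeasurable).smul hDu.1
  -- sigmaP ∈ L^q
  have hσLq : MemLp (sigmaP N p u.2) (ENNReal.ofReal q) μ := by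
    have hiff := memLp_norm_rpow_iff (q := ENNReal.ofReal (p - 1))
      (p := ENNReal.ofReal p) (f := u.2) hDu.1
      (by simp [ENNReal.ofReal_eq_zero]; linarith) (by simp)
    have hdiv : ENNReal.ofReal p / ENNReal.ofReal (p - 1) = ENNReal.ofReal q := by
      rw [← ENNReal.ofReal_div_of_pos (by linarith)]
      rw [hpq.conjugate_eq]
    have h2 : MemLp (fun x => ‖u.2 x‖ ^ (p - 1)) (ENNReal.ofReal q) μ := by
      have := hiff.2 hDu
      rw [ENNReal.toReal_ofReal (by linarith : (0:ℝ) ≤ p - 1), hdiv] at this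
      exact this
    refine h2.of_le hσmeas ?_
    filter_upwards with x
    rw [hσnorm x, Real.norm_eq_abs, abs_of_nonneg (Real.rpow_nonneg (norm_nonneg _) _)]
  -- integrability of the product of norms
  have hprod : Integrable (fun x => ‖sigmaP N p u.2 x‖ * ‖ψ.2 x‖) μ := by
    rw [← memLp_one_iff_integrable]
    have h := MemLp.smul (r := 1) (hDψ.norm) (hσLq.norm)
      (hpqr := hpq.symm.ennrealOfReal)
    exact h
  -- integrability of the inner products
  have hint1 : Integrable (fun x => ⟪sigmaP N p u.2 x, ψ.2 x⟫) μ := by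
    refine hprod.mono' (hσmeas.inner hDψ.1) ?_
    filter_upwards with x
    rw [Real.norm_eq_abs]
    exact abs_real_inner_le_norm _ _
  have hint2 : Integrable (fun x => ⟪sigmaP N p u.2 x, u.2 x⟫) μ := by
    have h := hDu.integrable_norm_rpow (by simp [ENNReal.ofReal_eq_zero]; linarith) (by simp)
    rw [ENNReal.toReal_ofReal hp0.le] at h
    exact h.congr (by filter_upwards with x using (hσinner x).symm)
  -- apply the variational inequality with v = ψ
  have hψK : ψ ∈ Kset N p Ω ψ := ⟨hψ, Filter.Eventually.of_forall fun _ => le_rfl⟩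
  have hVI := hu.2 ψ hψK
  have hRHS : (0:ℝ) ≤ ∫ x in Ω, f x * (ψ.1 x - u.1 x) := by
    refine integral_nonneg_of_ae ?_
    filter_upwards [hfneg, hu.1.2] with x h1 h2
    simp only [Pi.zero_apply]; nlinarith
  have hkey : (∫ x in Ω, ⟪sigmaP N p u.2 x, u.2 x⟫) ≤ ∫ x in Ω, ⟪sigmaP N p u.2 x, ψ.2 x⟫ := by
    have hsub : (∫ x in Ω, ⟪sigmaP N p u.2 x, ψ.2 x - u.2 x⟫)
        = (∫ x in Ω, ⟪sigmaP N p u.2 x, ψ.2 x⟫) - ∫ x in Ω, ⟪sigmaP N p u.2 x, u.2 x⟫ := by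
      rw [← integral_sub hint1 hint2]
      simp_rw [inner_sub_right]
      rfl
    have := le_trans hRHS hVI
    rw [hsub] at this
    linarith
  -- rewrite the two integrals
  have hEq2 : (∫ x in Ω, ⟪sigmaP N p u.2 x, u.2 x⟫) = ∫ x in Ω, ‖u.2 x‖ ^ p :=
    integral_congr_ae (Filter.Eventually.of_forall fun x => hσinner x)
  set a := ∫ x in Ω, ‖u.2 x‖ ^ p with ha
  set b := ∫ x in Ω, ‖ψ.2 x‖ ^ p with hb
  have ha0 : 0 ≤ a := integral_nonneg fun x => Real.rpow_nonneg (norm_nonneg _) _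
  have hb0 : 0 ≤ b := integral_nonneg fun x => Real.rpow_nonneg (norm_nonneg _) _
  -- Hölder
  have hHolder : (∫ x in Ω, ⟪sigmaP N p u.2 x, ψ.2 x⟫) ≤ a ^ (1/q) * b ^ (1/p) := by
    have h1 : (∫ x in Ω, ⟪sigmaP N p u.2 x, ψ.2 x⟫)
        ≤ ∫ x in Ω, ‖sigmaP N p u.2 x‖ * ‖ψ.2 x‖ := by
      refine integral_mono hint1 hprod fun x => real_inner_le_norm _ _
    have h2 := integral_mul_norm_le_Lp_mul_Lq hpq.symm hσLq hDψ
    have h3 : (fun x => ‖sigmaP N p u.2 x‖ ^ q) = fun x => ‖u.2 x‖ ^ p := by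
      funext x
      rw [hσnorm x, ← Real.rpow_mul (norm_nonneg _), hpq.sub_one_mul_conj]
    simp only [h3] at h2
    exact le_trans h1 h2
  have hab : a ≤ a ^ (1/q) * b ^ (1/p) := le_trans (hEq2 ▸ hkey) hHolder
  -- conclude a ≤ b
  rcases eq_or_lt_of_le ha0 with h | h
  · exact le_trans h.symm.le hb0
  · have haq : 0 < a ^ (1/q) := Real.rpow_pos_of_pos h _
    have hsplit : a = a ^ (1/q) * a ^ (1/p) := by
      rw [← Real.rpow_add h,
        show 1/q + 1/p = 1 by rw [one_div, one_div, add_comm, hpq.inv_add_inv_eq_one],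
        Real.rpow_one]
    have h4 : a ^ (1/p) ≤ b ^ (1/p) :=
      le_of_mul_le_mul_left (hsplit.symm.trans_le hab) haq
    calc a = (a ^ (1/p)) ^ p := by
            rw [← Real.rpow_mul ha0, one_div, inv_mul_cancel₀ hp0.ne', Real.rpow_one]
         _ ≤ (b ^ (1/p)) ^ p :=
            Real.rpow_le_rpow (Real.rpow_nonneg ha0 _) h4 hp0.le
         _ = b := by
            rw [← Real.rpow_mul hb0, one_div, inv_mul_cancel₀ hp0.ne', Real.rpow_one]


end
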